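/- arXiv:2302.01911 — 12 statements merged into one kernel-verified Lean document; each statement's English description precedes it below -/
import Mathlib

section
/- For every positive integer n and every real x ≥ 0, the n-th derivative of the arctangent function satisfies dⁿ/dxⁿ arctan(x) = (−1)^(n−1) (n−1)! / (1+x²)^(n/2) · sin( n · arcsin( 1/√(1+x²) ) ). -/
/-!
With `θ = π/2 - arctan x` one has `sin θ = (1 + x²)^(-1/2)` and `θ' = -sin² θ`, so the claim reads
`arctan⁽ⁿ⁾ x = (-1)^(n-1) (n-1)! sin θ ^ n sin (n θ)`. This follows by induction from the identity
`d/dθ (sin θ ^ n sin (n θ)) = n sin θ ^ (n-1) sin ((n+1) θ)`, a consequence of the addition formula for `sin ((n+1) θ)`.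
For `x ≥ 0` the angle `θ` lies in `(0, π/2]`, where it equals `arcsin (1 / √(1 + x²))`.
-/

open Real Nat

theorem hasDerivAt_sin_pow_succ_mul_sin (n : ℕ) (t : ℝ) :
    HasDerivAt (fun t => sin t ^ (n + 1) * sin ((n + 1) * t))
      ((n + 1) * sin t ^ n * sin ((n + 2) * t)) t := by
  refine (((hasDerivAt_sin t).pow (n + 1)).mul
    (((hasDerivAt_id t).const_mul ((n : ℝ) + 1)).sin)).congr_deriv ?_
  simp only [Pi.pow_apply, id, mul_one, add_tsub_cancel_right]
  rw [show ((n : ℝ) + 2) * t = (n + 1) * t + t by ring, sin_add]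
  push_cast
  ring

theorem hasDerivAt_pi_div_two_sub_arctan (x : ℝ) :
    HasDerivAt (fun x => π / 2 - arctan x) (-sin (π / 2 - arctan x) ^ 2) x := by
  rw [sin_pi_div_two_sub, cos_sq_arctan]
  exact (hasDerivAt_arctan x).const_sub _

theorem iteratedDeriv_succ_arctan (n : ℕ) :
    iteratedDeriv (n + 1) arctan = fun x =>
      (-1) ^ n * n ! * (sin (π / 2 - arctan x) ^ (n + 1) * sin ((n + 1) * (π / 2 - arctan x))) := by
  induction n with
  | zero =>
    funext x
    simp [Real.deriv_arctan, ← sq, sin_pi_div_two_sub, cos_sq_arctan]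
  | succ n ih =>
    funext x
    rw [iteratedDeriv_succ, ih]
    have h := ((hasDerivAt_sin_pow_succ_mul_sin n _).comp x
      (hasDerivAt_pi_div_two_sub_arctan x)).const_mul ((-1) ^ n * (n ! : ℝ))
    refine h.deriv.trans ?_
    push_cast [factorial_succ, add_assoc, one_add_one_eq_two]
    ring

theorem arcsin_one_div_sqrt_one_add_sq {x : ℝ} (hx : 0 ≤ x) :
    arcsin (1 / √(1 + x ^ 2)) = π / 2 - arctan x := by
  rw [arctan_eq_arccos hx, arccos_eq_pi_div_two_sub_arcsin, one_div]
  ring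

theorem arctan_iteratedDeriv_nonneg (n : ℕ) (hn : 0 < n) (x : ℝ) (hx : 0 ≤ x) :
    iteratedDeriv n Real.arctan x =
      (-1) ^ (n - 1) * (Nat.factorial (n - 1) : ℝ) / (1 + x ^ 2) ^ ((n : ℝ) / 2) *
        Real.sin (n * Real.arcsin (1 / Real.sqrt (1 + x ^ 2))) := by
  obtain ⟨m, rfl⟩ := exists_eq_add_one_of_ne_zero hn.ne'
  simp only [iteratedDeriv_succ_arctan]
  rw [arcsin_one_div_sqrt_one_add_sq hx, add_tsub_cancel_right,
    rpow_div_two_eq_sqrt _ (by positivity), rpow_natCast, sin_pi_div_two_sub, cos_arctan]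
  push_cast
  ring
end

section
/- For every real x ≥ 0, the series ∑_{n=1}^∞ (1/n) (x²/(1+x²))^(n/2) · sin( n · arcsin( 1/√(1+x²) ) ) converges and its sum equals arctan(x). -/
/-!
With `r = x / √(1 + x²)` and `θ = arcsin (1 / √(1 + x²))` the series is the imaginary part
of `∑ zⁿ / n = -log (1 - z)` at `z = r e^{iθ}`. Since `cos θ = r` and `sin θ = 1 / √(1 + x²)`,
one finds `1 - z = (1 - i x) / (1 + x²)`, whose argument is `-arctan x`.
-/

open Real

theorem Complex.arg_eq_arctan_of_re_pos {z : ℂ} (hz : 0 < z.re) :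
    arg z = Real.arctan (z.im / z.re) := by
  have h := abs_lt.1 (abs_arg_lt_pi_div_two_iff.2 (Or.inl hz))
  exact (arctan_eq_of_tan_eq (tan_arg z) ⟨h.1, h.2⟩).symm

theorem Real.sq_rpow_natCast_div_two {r : ℝ} (hr : 0 ≤ r) (k : ℕ) :
    (r ^ 2) ^ ((k : ℝ) / 2) = r ^ k := by
  rw [← rpow_natCast r 2, ← rpow_mul hr, ← rpow_natCast]
  congr 1
  push_cast; ring

theorem hasSum_pow_mul_sin_div {r : ℝ} (hr : |r| < 1) (θ : ℝ) :
    HasSum (fun n : ℕ => (1 / ((n : ℝ) + 1)) * r ^ (n + 1) * sin (((n : ℝ) + 1) * θ))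
      (arctan (r * sin θ / (1 - r * cos θ))) := by
  set z : ℂ := r * Complex.exp (θ * Complex.I)
  have hz : ‖z‖ < 1 := by simpa [z, Complex.norm_exp_ofReal_mul_I] using hr
  have hterm (n : ℕ) : (z ^ (n + 1) / ((n : ℂ) + 1)).im =
      (1 / ((n : ℝ) + 1)) * r ^ (n + 1) * sin (((n : ℝ) + 1) * θ) := by
    have hpow : z ^ (n + 1) =
        ((r ^ (n + 1) : ℝ) : ℂ) * Complex.exp ((((n : ℝ) + 1) * θ : ℝ) * Complex.I) := by
      rw [mul_pow, ← Complex.exp_nat_mul]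
      push_cast
      ring_nf
    rw [hpow, ← Nat.cast_succ (R := ℂ), Complex.div_natCast_im, Complex.im_ofReal_mul,
      Complex.exp_ofReal_mul_I_im]
    push_cast
    ring
  have hre : (1 - z).re = 1 - r * cos θ := by simp [z, Complex.exp_ofReal_mul_I_re]
  have him : (1 - z).im = -(r * sin θ) := by simp [z, Complex.exp_ofReal_mul_I_im]
  have hre_pos : 0 < 1 - r * cos θ := sub_pos.2 <|
    calc r * cos θ ≤ |r| * |cos θ| := (le_abs_self _).trans (abs_mul r (cos θ)).le
      _ ≤ |r| := mul_le_of_le_one_right (abs_nonneg r) (abs_cos_le_one θ)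
      _ < 1 := hr
  have hsum : (-Complex.log (1 - z)).im = arctan (r * sin θ / (1 - r * cos θ)) := by
    rw [Complex.neg_im, Complex.log_im, Complex.arg_eq_arctan_of_re_pos (hre ▸ hre_pos), hre, him,
      neg_div, arctan_neg, neg_neg]
  simpa only [hterm, hsum] using Complex.hasSum_im (Complex.hasSum_taylorSeries_neg_log' hz)

theorem arctan_series_nonneg (x : ℝ) (hx : 0 ≤ x) :
    HasSum (fun n : ℕ =>
      (1 / ((n : ℝ) + 1)) * (x ^ 2 / (1 + x ^ 2)) ^ (((n : ℝ) + 1) / 2) *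
        Real.sin (((n : ℝ) + 1) * Real.arcsin (1 / Real.sqrt (1 + x ^ 2))))
      (Real.arctan x) := by
  set s := √(1 + x ^ 2)
  have hs : 0 < s := by positivity
  have hs_sq : s ^ 2 = 1 + x ^ 2 := sq_sqrt (by positivity)
  have hsin : sin (arcsin (1 / s)) = 1 / s :=
    sin_arcsin (by linarith [one_div_pos.2 hs]) ((div_le_one hs).2 (by nlinarith))
  have hcos : cos (arcsin (1 / s)) = x / s := by
    have h : 1 - (1 / s) ^ 2 = (x / s) ^ 2 := by
      field_simp
      linarith
    rw [cos_arcsin, h, sqrt_sq (by positivity)]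
  have hr : |x / s| < 1 := by
    rw [abs_of_nonneg (by positivity), div_lt_one hs]
    nlinarith
  have hratio : x / s * (1 / s) / (1 - x / s * (x / s)) = x := by
    field_simp
    rw [hs_sq]
    ring
  have hbase : x ^ 2 / (1 + x ^ 2) = (x / s) ^ 2 := by rw [div_pow, hs_sq]
  convert hasSum_pow_mul_sin_div hr (arcsin (1 / s)) using 2 with n
  · rw [hbase, ← Nat.cast_succ, sq_rpow_natCast_div_two (by positivity)]
  · rw [hsin, hcos, hratio]
end

section
/- For every real x, the series ∑_{n=1}^∞ (1/n) (x²/(1+x²))^(n/2) · sin( n · arcsin( 1/√(1+x²) ) ) converges and sgn(x) times its sum equals arctan(x), where sgn(y) = −1 if y < 0 and sgn(y) = 1 if y ≥ 0. -/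
/-!
With `r = |x| / √(1 + x²)` and `θ = arcsin (1 / √(1 + x²))`, the `n`-th term is
`Im (zⁿ / n)` for `z = r e^{iθ}`, so the series sums to `Im (-log (1 - z)) = -arg (1 - z)`.
Since `cos θ = r`, we get `1 - z = (1 - i |x|) / (1 + x²)`, whose argument is `-arctan |x|`.
-/

/-- The modified signum function: `-1` for negative inputs, `1` otherwise. -/
noncomputable def sgn (y : ℝ) : ℝ := if y < 0 then -1 else 1

open Real

theorem Complex.arg_eq_arctan_of_re_pos_s3 {w : ℂ} (hw : 0 < w.re) :
    w.arg = Real.arctan (w.im / w.re) := by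
  have h := abs_lt.mp (Complex.abs_arg_lt_pi_div_two_iff.mpr (Or.inl hw))
  rw [← Complex.tan_arg, Real.arctan_tan h.1 h.2]

theorem hasSum_pow_mul_sin_div_succ {r : ℝ} (hr : |r| < 1) (θ : ℝ) :
    HasSum (fun n : ℕ => 1 / ((n : ℝ) + 1) * r ^ (n + 1) * sin (((n : ℝ) + 1) * θ))
      (arctan (r * sin θ / (1 - r * cos θ))) := by
  set z : ℂ := r * Complex.exp (θ * Complex.I)
  have hz : ‖z‖ < 1 := by
    simpa [z, Complex.norm_exp_ofReal_mul_I] using hr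
  have hre : 0 < (1 - z).re := by
    have : r * cos θ < 1 := calc
      r * cos θ ≤ |r| * |cos θ| := (le_abs_self _).trans_eq (abs_mul r (cos θ))
      _ ≤ |r| := mul_le_of_le_one_right (abs_nonneg r) (abs_cos_le_one θ)
      _ < 1 := hr
    simpa [z, Complex.exp_ofReal_mul_I_re] using this
  have hterm (n : ℕ) : (z ^ (n + 1) / ((n : ℂ) + 1)).im =
      1 / ((n : ℝ) + 1) * r ^ (n + 1) * sin (((n : ℝ) + 1) * θ) := by
    have hpow : z ^ (n + 1) =
        ((r ^ (n + 1) : ℝ) : ℂ) * Complex.exp (((n + 1 : ℝ) * θ : ℝ) * Complex.I) := by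
      rw [mul_pow, ← Complex.exp_nat_mul]; push_cast; ring_nf
    rw [hpow, show (n : ℂ) + 1 = ((n + 1 : ℝ) : ℂ) by push_cast; ring, Complex.div_ofReal_im,
      Complex.im_ofReal_mul, Complex.exp_ofReal_mul_I_im]
    ring
  have hlog : (-Complex.log (1 - z)).im = arctan (r * sin θ / (1 - r * cos θ)) := by
    rw [Complex.neg_im, Complex.log_im, Complex.arg_eq_arctan_of_re_pos_s3 hre, ← arctan_neg]
    congr 1
    simp only [z, Complex.sub_re, Complex.sub_im, Complex.one_re, Complex.one_im, Complex.re_ofReal_mul,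
      Complex.im_ofReal_mul, Complex.exp_ofReal_mul_I_re, Complex.exp_ofReal_mul_I_im]
    ring
  simpa only [hterm, hlog] using Complex.hasSum_im (Complex.hasSum_taylorSeries_neg_log' hz)

theorem sgn_mul_arctan_abs (x : ℝ) : sgn x * arctan |x| = arctan x := by
  unfold sgn
  split_ifs with hx
  · rw [abs_of_neg hx, arctan_neg]; ring
  · rw [abs_of_nonneg (not_lt.mp hx), one_mul]

theorem rpow_succ_div_two {a : ℝ} (ha : 0 ≤ a) (n : ℕ) :
    a ^ (((n : ℝ) + 1) / 2) = √a ^ (n + 1) := by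
  rw [sqrt_eq_rpow, ← rpow_natCast, ← rpow_mul ha]
  push_cast; ring_nf

theorem sqrt_sq_div_one_add_sq (x : ℝ) : √(x ^ 2 / (1 + x ^ 2)) = |x| / √(1 + x ^ 2) := by
  rw [sqrt_div' _ (by positivity), sqrt_sq_eq_abs]

theorem sin_arcsin_one_div_sqrt_one_add_sq (x : ℝ) :
    sin (arcsin (1 / √(1 + x ^ 2))) = 1 / √(1 + x ^ 2) := by
  have hs : 1 ≤ √(1 + x ^ 2) := one_le_sqrt.mpr (le_add_of_nonneg_right (sq_nonneg x))
  refine sin_arcsin (by linarith [div_pos one_pos (zero_lt_one.trans_le hs)]) ?_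
  rwa [div_le_one (zero_lt_one.trans_le hs)]

theorem cos_arcsin_one_div_sqrt_one_add_sq (x : ℝ) :
    cos (arcsin (1 / √(1 + x ^ 2))) = |x| / √(1 + x ^ 2) := by
  rw [cos_arcsin, div_pow, sq_sqrt (by positivity), ← sqrt_sq_div_one_add_sq]
  congr 1
  field_simp
  ring

theorem arctan_series_sgn (x : ℝ) :
    Summable (fun n : ℕ =>
      (1 / ((n : ℝ) + 1)) * (x ^ 2 / (1 + x ^ 2)) ^ (((n : ℝ) + 1) / 2) *
        Real.sin (((n : ℝ) + 1) * Real.arcsin (1 / Real.sqrt (1 + x ^ 2)))) ∧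
    sgn x * ∑' n : ℕ,
      (1 / ((n : ℝ) + 1)) * (x ^ 2 / (1 + x ^ 2)) ^ (((n : ℝ) + 1) / 2) *
        Real.sin (((n : ℝ) + 1) * Real.arcsin (1 / Real.sqrt (1 + x ^ 2)))
      = Real.arctan x := by
  set θ := arcsin (1 / √(1 + x ^ 2))
  have hs : 0 < √(1 + x ^ 2) := sqrt_pos.mpr (by positivity)
  have hr : |(|x| / √(1 + x ^ 2))| < 1 := by
    rw [abs_div, abs_abs, abs_of_pos hs, div_lt_one hs, ← sqrt_sq_eq_abs]
    exact sqrt_lt_sqrt (sq_nonneg x) (lt_one_add _)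
  have hval : |x| / √(1 + x ^ 2) * sin θ / (1 - |x| / √(1 + x ^ 2) * cos θ) = |x| := by
    have hs2 : √(1 + x ^ 2) ^ 2 = 1 + x ^ 2 := sq_sqrt (by positivity)
    rw [sin_arcsin_one_div_sqrt_one_add_sq, cos_arcsin_one_div_sqrt_one_add_sq]
    field_simp
    rw [hs2, sq_abs]
    ring
  have hsum := hasSum_pow_mul_sin_div_succ hr θ
  rw [hval, ← sqrt_sq_div_one_add_sq] at hsum
  simp only [← rpow_succ_div_two (a := x ^ 2 / (1 + x ^ 2)) (by positivity)] at hsum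
  exact ⟨hsum.summable, by rw [hsum.tsum_eq, sgn_mul_arctan_abs]⟩
end

section
/- For every positive integer n and every real x, the following identity between a real and a complex expression holds: sgn(−x)^(n−1) · (n−1)! / (1+x²)^(n/2) · sin( n · arcsin( 1/√(1+x²) ) ) = (−1)ⁿ (n−1)! / (2i) · ( 1/(x+i)ⁿ − 1/(x−i)ⁿ ), where sgn(y) = −1 if y < 0 and sgn(y) = 1 if y ≥ 0. -/
open Complex ComplexConjugate

theorem one_div_pow_sub_one_div_conj_pow (z : ℂ) (n : ℕ) :
    1 / z ^ n - 1 / conj z ^ n = -2 * I * Real.sin (n * arg z) / ‖z‖ ^ n := by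
  have hpow : z ^ n = ‖z‖ ^ n * exp (n * arg z * I) := by
    conv_lhs => rw [← norm_mul_exp_arg_mul_I z]
    rw [mul_pow, ← exp_nat_mul, mul_assoc]
  have hconj : conj z ^ n = ‖z‖ ^ n * exp (-(n * arg z * I)) := by
    rw [← map_pow, hpow, map_mul, ← exp_conj]
    simp
  have hsin := two_sin (n * arg z)
  rw [neg_mul] at hsin
  rw [hpow, hconj, one_div, one_div, mul_inv, mul_inv, ← exp_neg, ← exp_neg, neg_neg,
    ofReal_sin]
  push_cast
  -- `e^{-iw} - e^{iw} = -2i sin w`, from `two_sin` multiplied by `i`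
  linear_combination (‖z‖ ^ n : ℂ)⁻¹ * (I * hsin +
    (exp (-(n * arg z * I)) - exp (n * arg z * I)) * I_sq)

theorem norm_ofReal_add_I (x : ℝ) : ‖(x : ℂ) + I‖ = √(1 + x ^ 2) := by
  simpa [add_comm] using norm_add_mul_I x 1

theorem arg_ofReal_add_I_of_pos {x : ℝ} (hx : 0 < x) :
    arg (x + I) = Real.arcsin (1 / √(1 + x ^ 2)) := by
  rw [arg_of_re_nonneg (by simpa using hx.le), norm_ofReal_add_I]
  simp

theorem arg_ofReal_add_I_of_nonpos {x : ℝ} (hx : x ≤ 0) :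
    arg (x + I) = Real.pi - Real.arcsin (1 / √(1 + x ^ 2)) := by
  rcases hx.lt_or_eq with hx | rfl
  · rw [arg_of_re_neg_of_im_nonneg (by simpa using hx) (by simp), norm_ofReal_add_I]
    simp only [neg_add_rev, add_im, neg_im, I_im, ofReal_im, neg_zero, add_zero, neg_div,
      Real.arcsin_neg]
    ring
  · norm_num [Real.arcsin_one, sub_half]

theorem sgn_neg_pow_mul_sin_arcsin_eq_neg_one_pow_mul_sin_arg {n : ℕ} (hn : 0 < n) (x : ℝ) :
    sgn (-x) ^ (n - 1) * Real.sin (n * Real.arcsin (1 / √(1 + x ^ 2))) =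
      (-1) ^ (n + 1) * Real.sin (n * arg (x + I)) := by
  rcases le_or_gt x 0 with hx | hx
  · have hsgn : sgn (-x) = 1 := if_neg (by linarith)
    have hsq : ((-1 : ℝ) ^ n) ^ 2 = 1 := by rw [pow_right_comm, neg_one_sq, one_pow]
    rw [hsgn, one_pow, arg_ofReal_add_I_of_nonpos hx, mul_sub, Real.sin_nat_mul_pi_sub]
    linear_combination (-Real.sin (n * Real.arcsin (1 / √(1 + x ^ 2)))) * hsq
  · have hsgn : sgn (-x) = -1 := if_pos (by linarith)
    obtain ⟨m, rfl⟩ : ∃ m, n = m + 1 := ⟨n - 1, by omega⟩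
    rw [hsgn, arg_ofReal_add_I_of_pos hx, Nat.add_sub_cancel]
    ring

open Complex in
theorem sgn_sin_complex_identity (n : ℕ) (hn : 0 < n) (x : ℝ) :
    ((sgn (-x) ^ (n - 1) * (Nat.factorial (n - 1) : ℝ) / (1 + x ^ 2) ^ ((n : ℝ) / 2) *
        Real.sin (n * Real.arcsin (1 / Real.sqrt (1 + x ^ 2))) : ℝ) : ℂ) =
      (-1) ^ n * (Nat.factorial (n - 1) : ℂ) / (2 * I) *
        (1 / ((x : ℂ) + I) ^ n - 1 / ((x : ℂ) - I) ^ n) := by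
  have hconj : (x : ℂ) - I = conj ((x : ℂ) + I) := by simp [sub_eq_add_neg]
  have hsin := congrArg ofReal (sgn_neg_pow_mul_sin_arcsin_eq_neg_one_pow_mul_sin_arg hn x)
  rw [hconj, one_div_pow_sub_one_div_conj_pow, norm_ofReal_add_I,
    Real.rpow_div_two_eq_sqrt _ (by positivity), Real.rpow_natCast]
  push_cast at hsin ⊢
  field_simp
  linear_combination ((n - 1).factorial : ℂ) / (√(1 + x ^ 2) : ℂ) ^ n * hsin
end

section
/- For every real x, the complex series ∑_{n=1}^∞ (xⁿ/n) · ( 1/(x+i)ⁿ − 1/(x−i)ⁿ ) converges and (i/2) times its sum equals arctan(x) (viewed as a complex number). -/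
/-!
For `z = x / (x + i)`, which lies in the unit disc and has conjugate `x / (x - i)`, the `n`-th term
of the series is `(zⁿ - z̄ⁿ) / n`. Summing the Taylor series of `-log (1 - w)` at `w = z` and
`w = z̄` gives `-log (1 - z) + conj (log (1 - z)) = -2i · arg (1 - z)`, and `1 - z` is a positive
real multiple of `1 + ix`, whose argument is `arctan x`.
-/

open ComplexConjugate

namespace Complex

theorem norm_re_div_lt_one {z : ℂ} (hz : z.im ≠ 0) : ‖(z.re : ℂ) / z‖ < 1 := by
  have hz0 : z ≠ 0 := fun h => hz (by simp [h])
  rw [norm_div, div_lt_one (norm_pos_iff.mpr hz0), norm_real, Real.norm_eq_abs]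
  exact abs_re_lt_norm.mpr hz

theorem arg_eq_arctan_of_re_pos_s6 {z : ℂ} (hz : 0 < z.re) : arg z = Real.arctan (z.im / z.re) :=
  (Real.arctan_eq_of_tan_eq (tan_arg z) (by
    rw [Set.mem_Ioo, ← abs_lt, abs_arg_lt_pi_div_two_iff]; exact Or.inl hz)).symm

theorem hasSum_pow_sub_conj_pow_div {z : ℂ} (hz : ‖z‖ < 1) :
    HasSum (fun n : ℕ => (z ^ (n + 1) - conj z ^ (n + 1)) / (n + 1))
      (-(2 * arg (1 - z) * I)) := by
  have h := hasSum_taylorSeries_neg_log' hz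
  have h' := h.sub (hasSum_conj'.mpr h)
  rw [map_neg, sub_neg_eq_add, neg_add_eq_sub, ← neg_sub, sub_conj, log_im, ofReal_mul,
    ofReal_ofNat] at h'
  refine h'.congr_fun fun n => ?_
  simp [sub_div]

theorem arg_one_sub_ofReal_div_add_I (x : ℝ) : arg (1 - x / (x + I)) = Real.arctan x := by
  have hxI : (x : ℂ) + I ≠ 0 := fun h => by simpa using congrArg im h
  have h : 1 - x / (x + I) = ((x ^ 2 + 1)⁻¹ : ℝ) * (1 + x * I) := by
    have : (x : ℂ) ^ 2 + 1 ≠ 0 := by exact_mod_cast (by positivity : x ^ 2 + 1 ≠ 0)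
    push_cast
    field_simp
    linear_combination (-(x : ℂ)) * I_sq
  rw [h, arg_real_mul _ (by positivity), arg_eq_arctan_of_re_pos_s6 (by simp)]
  simp

end Complex

open Complex in
theorem arctan_complex_series (x : ℝ) :
    Summable (fun n : ℕ =>
      ((x : ℂ) ^ (n + 1) / ((n : ℂ) + 1)) *
        (1 / ((x : ℂ) + I) ^ (n + 1) - 1 / ((x : ℂ) - I) ^ (n + 1))) ∧
    I / 2 * ∑' n : ℕ,
      ((x : ℂ) ^ (n + 1) / ((n : ℂ) + 1)) *
        (1 / ((x : ℂ) + I) ^ (n + 1) - 1 / ((x : ℂ) - I) ^ (n + 1))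
      = (Real.arctan x : ℂ) := by
  set z : ℂ := x / (x + I)
  have hz : ‖z‖ < 1 := by simpa [z] using norm_re_div_lt_one (z := x + I) (by simp)
  have hconj : conj z = x / (x - I) := by simp [z, map_div₀, sub_eq_add_neg]
  have hsum : HasSum (fun n : ℕ => ((x : ℂ) ^ (n + 1) / ((n : ℂ) + 1)) *
      (1 / ((x : ℂ) + I) ^ (n + 1) - 1 / ((x : ℂ) - I) ^ (n + 1))) (-(2 * arg (1 - z) * I)) :=
    (hasSum_pow_sub_conj_pow_div hz).congr_fun fun n => by
      rw [hconj, div_pow, div_pow]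
      ring
  refine ⟨hsum.summable, ?_⟩
  rw [hsum.tsum_eq, arg_one_sub_ofReal_div_add_I]
  linear_combination (-(Real.arctan x : ℂ)) * I_sq
end

section
/- For every real x, the series ∑_{n=1}^∞ ((−1)^(n−1) xⁿ / n!) · (dⁿ/dxⁿ arctan)(x) converges and its sum equals arctan(x). -/
/-!
The complex arctangent `-(I/2) log ((1 + zI)/(1 - zI))` is holomorphic off the cuts
`{iy : |y| ≥ 1}`, hence on the disc around a real `x` of radius `√(1 + x²)`, whose boundary
passes through `±I`. This disc contains `0`, so the Taylor series of `arctan` at `x` converges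
at `0` to `arctan 0 = 0`. Taking real parts and moving the constant term `arctan x` to the other
side gives the series.
-/

open Complex Metric Nat

namespace Complex

theorem one_sub_mul_I_ne_zero {z : ℂ} (hz : z.re ≠ 0 ∨ ‖z‖ < 1) : 1 - z * I ≠ 0 := by
  intro h
  have him : 1 + z.im = 0 := by simpa using congrArg re h
  have hre : z.re = 0 := by simpa using congrArg im h
  have hnorm : ‖z‖ < 1 := hz.resolve_left (not_not.mpr hre)
  linarith [neg_abs_le z.im, abs_im_le_norm z]

/-- `(1 + zI)/(1 - zI) = (1 - ‖z‖² + 2 z.re I) / ‖1 - zI‖²`. -/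
theorem one_add_mul_I_div_one_sub_mul_I_mem_slitPlane {z : ℂ} (hz : z.re ≠ 0 ∨ ‖z‖ < 1) :
    (1 + z * I) / (1 - z * I) ∈ slitPlane := by
  have hN : 0 < normSq (1 - z * I) := normSq_pos.mpr (one_sub_mul_I_ne_zero hz)
  rw [mem_slitPlane_iff, div_re, div_im, ← add_div, ← sub_div]
  simp only [add_re, sub_re, add_im, sub_im, mul_re, mul_im, one_re, one_im, I_re, I_im]
  rcases hz with hre | hnorm
  · right
    refine div_ne_zero ?_ hN.ne'
    ring_nf
    simpa using hre
  · left
    refine div_pos ?_ hN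
    nlinarith [sq_norm_sub_sq_re z, norm_nonneg z]

theorem differentiableAt_arctan {z : ℂ} (hz : z.re ≠ 0 ∨ ‖z‖ < 1) :
    DifferentiableAt ℂ arctan z := by
  have hne := one_sub_mul_I_ne_zero hz
  have hslit := one_add_mul_I_div_one_sub_mul_I_mem_slitPlane hz
  unfold arctan
  fun_prop (disch := assumption)

theorem re_ne_zero_or_norm_lt_one_of_mem_ball {x : ℝ} {z : ℂ}
    (hz : z ∈ ball (x : ℂ) √(1 + x ^ 2)) : z.re ≠ 0 ∨ ‖z‖ < 1 := by
  rw [mem_ball, dist_eq_re_im, Real.sqrt_lt_sqrt_iff (by positivity)] at hz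
  refine or_iff_not_imp_left.2 fun hre => ?_
  rw [not_not] at hre
  simp only [ofReal_re, ofReal_im, sub_zero, hre] at hz
  nlinarith [sq_norm_sub_sq_re z, norm_nonneg z]

theorem differentiableOn_arctan_ball (x : ℝ) :
    DifferentiableOn ℂ arctan (ball (x : ℂ) √(1 + x ^ 2)) := fun _ hz =>
  (differentiableAt_arctan (re_ne_zero_or_norm_lt_one_of_mem_ball hz)).differentiableWithinAt

theorem analyticAt_arctan_ofReal (x : ℝ) : AnalyticAt ℂ arctan x :=
  (differentiableOn_arctan_ball x).analyticOnNhd isOpen_ball x (mem_ball_self (by positivity))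

end Complex

theorem iteratedDeriv_eq_re_iteratedDeriv {f : ℂ → ℂ} {g : ℝ → ℝ}
    (hfg : ∀ y : ℝ, g y = (f y).re) (hf : ∀ y : ℝ, AnalyticAt ℂ f y) (n : ℕ) (y : ℝ) :
    iteratedDeriv n g y = (iteratedDeriv n f y).re := by
  induction n generalizing f g with
  | zero => exact hfg y
  | succ n ih =>
    rw [iteratedDeriv_succ', iteratedDeriv_succ']
    refine ih (fun y => ?_) (fun y => (hf y).deriv)
    rw [funext hfg]
    exact (hf y).differentiableAt.hasDerivAt.real_of_complex.deriv

theorem Real.iteratedDeriv_arctan (n : ℕ) (x : ℝ) :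
    iteratedDeriv n arctan x = (iteratedDeriv n Complex.arctan x).re :=
  iteratedDeriv_eq_re_iteratedDeriv
    (fun y => by rw [← Complex.ofReal_arctan, Complex.ofReal_re])
    Complex.analyticAt_arctan_ofReal n x

theorem Real.hasSum_taylorSeries_arctan {x y : ℝ} (hy : |y - x| < √(1 + x ^ 2)) :
    HasSum (fun n : ℕ => (n ! : ℝ)⁻¹ * (y - x) ^ n * iteratedDeriv n arctan x) (arctan y) := by
  have hy' : (y : ℂ) ∈ ball (x : ℂ) √(1 + x ^ 2) := by
    rwa [mem_ball, Complex.dist_eq, ← ofReal_sub, norm_real, Real.norm_eq_abs]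
  have H := hasSum_re <|
    Complex.hasSum_taylorSeries_on_ball (Complex.differentiableOn_arctan_ball x) hy'
  rw [← Complex.ofReal_arctan, ofReal_re] at H
  convert H using 2 with n
  rw [Real.iteratedDeriv_arctan, ← ofReal_sub, smul_eq_mul, smul_eq_mul, ← ofReal_pow,
    ← ofReal_natCast, ← ofReal_inv, re_ofReal_mul, re_ofReal_mul, mul_assoc]

theorem arctan_deriv_series (x : ℝ) :
    HasSum (fun n : ℕ =>
      ((-1) ^ n * x ^ (n + 1) / (Nat.factorial (n + 1) : ℝ)) *
        iteratedDeriv (n + 1) Real.arctan x)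
      (Real.arctan x) := by
  have hx : |0 - x| < √(1 + x ^ 2) := by
    rw [zero_sub, abs_neg, ← Real.sqrt_sq_eq_abs]
    exact Real.sqrt_lt_sqrt (sq_nonneg x) (lt_one_add _)
  have H := (hasSum_nat_add_iff' 1).mpr (Real.hasSum_taylorSeries_arctan hx)
  simp only [Real.arctan_zero, Finset.range_one, Finset.sum_singleton, pow_zero,
    Nat.factorial_zero, Nat.cast_one, inv_one, one_mul, iteratedDeriv_zero, zero_sub] at H
  refine (neg_neg (Real.arctan x) ▸ H.neg).congr_fun fun n => ?_
  rw [neg_pow x]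
  ring
end

section
/- For every real x, the series ∑_{n=0}^∞ ((−1)^(n−1) xⁿ / n!) · (dⁿ/dxⁿ arctan)(x), whose n = 0 term is −arctan(x), converges and its sum equals 0. -/
/-!
The complex arctangent `-(i/2) log((1 + z i)/(1 - z i))` is holomorphic off its branch cuts
`{t i | 1 ≤ |t|}`. For real `x` the disc around `x` of radius `√(1 + x²) = |x - i|` avoids these
cuts and contains `0`, so the Taylor series of `arctan` at `x`, evaluated at `0`, converges to
`arctan 0 = 0`. Its `n`-th term is `(-x)ⁿ / n! · arctan⁽ⁿ⁾(x)`, and on the real line the complex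
derivatives of `arctan` are the real ones.
-/

open Complex Metric
open scoped Nat

/-- The complement of the branch cuts `{t * I | 1 ≤ |t|}` of `Complex.arctan`. -/
def arctanDomain : Set ℂ := {z | z.re ≠ 0 ∨ |z.im| < 1}

lemma isOpen_arctanDomain : IsOpen arctanDomain :=
  (isOpen_ne_fun continuous_re continuous_const).union
    (isOpen_lt (continuous_abs.comp continuous_im) continuous_const)

lemma ofReal_mem_arctanDomain (x : ℝ) : (x : ℂ) ∈ arctanDomain := by
  right
  simp

lemma one_sub_mul_I_ne_zero_of_mem_arctanDomain {z : ℂ} (hz : z ∈ arctanDomain) :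
    1 - z * I ≠ 0 := by
  intro h
  have hre : 1 + z.im = 0 := by simpa using congrArg re h
  have him : z.re = 0 := by simpa using congrArg im h
  rcases hz with hz | hz
  · exact hz him
  · rw [abs_lt] at hz
    linarith [hz.1]

lemma one_add_mul_I_div_mem_slitPlane_of_mem_arctanDomain {z : ℂ}
    (hz : z ∈ arctanDomain) :
    (1 + z * I) / (1 - z * I) ∈ slitPlane := by
  have hN : 0 < normSq (1 - z * I) :=
    normSq_pos.mpr (one_sub_mul_I_ne_zero_of_mem_arctanDomain hz)
  rw [mem_slitPlane_iff]
  by_cases h0 : z.re = 0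
  · left
    have him : |z.im| < 1 := hz.resolve_left (not_not.mpr h0)
    have hre : ((1 + z * I) / (1 - z * I)).re = (1 - z.im ^ 2) / normSq (1 - z * I) := by
      simp only [div_re, add_re, one_re, mul_re, h0, I_re, mul_zero, I_im, mul_one, zero_sub,
        sub_re, sub_neg_eq_add, add_im, one_im, mul_im, add_zero, sub_im, sub_self, zero_div]
      ring
    rw [hre]
    exact div_pos (by nlinarith [abs_lt.mp him]) hN
  · right
    have him : ((1 + z * I) / (1 - z * I)).im = 2 * z.re / normSq (1 - z * I) := by
      simp only [div_im, add_im, one_im, mul_im, I_im, mul_one, I_re, mul_zero, add_zero, zero_add,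
        sub_re, one_re, mul_re, zero_sub, sub_neg_eq_add, add_re, sub_im, mul_neg]
      ring
    rw [him]
    exact div_ne_zero (mul_ne_zero two_ne_zero h0) hN.ne'

lemma differentiableAt_arctan {z : ℂ} (hz : z ∈ arctanDomain) : DifferentiableAt ℂ arctan z := by
  have hq : DifferentiableAt ℂ (fun w ↦ (1 + w * I) / (1 - w * I)) z :=
    (by fun_prop : DifferentiableAt ℂ (fun w ↦ 1 + w * I) z).div (by fun_prop)
      (one_sub_mul_I_ne_zero_of_mem_arctanDomain hz)
  exact (hq.clog (one_add_mul_I_div_mem_slitPlane_of_mem_arctanDomain hz)).const_mul _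

lemma differentiableOn_arctan : DifferentiableOn ℂ arctan arctanDomain :=
  fun _ hz ↦ (differentiableAt_arctan hz).differentiableWithinAt

lemma ball_sqrt_one_add_sq_subset_arctanDomain (x : ℝ) :
    ball (x : ℂ) √(1 + x ^ 2) ⊆ arctanDomain := by
  intro z hz
  by_cases h0 : z.re = 0
  · right
    rw [mem_ball, dist_eq_re_im, Real.sqrt_lt_sqrt_iff (by positivity)] at hz
    simp only [h0, ofReal_re, ofReal_im, sub_zero, zero_sub, neg_sq] at hz
    exact sq_lt_one_iff_abs_lt_one _ |>.mp (by linarith)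
  · exact Or.inl h0

lemma zero_mem_ball_sqrt_one_add_sq (x : ℝ) : (0 : ℂ) ∈ ball (x : ℂ) √(1 + x ^ 2) := by
  rw [mem_ball, dist_comm, dist_zero_right, norm_real, Real.norm_eq_abs,
    Real.lt_sqrt (abs_nonneg x), sq_abs]
  linarith

lemma ofReal_iteratedDeriv_of_differentiableOn {f : ℂ → ℂ} {g : ℝ → ℝ} {U : Set ℂ}
    (hU : IsOpen U) (hf : DifferentiableOn ℂ f U) (hRU : ∀ x : ℝ, (x : ℂ) ∈ U)
    (hfg : ∀ x : ℝ, (g x : ℂ) = f x) (n : ℕ) (x : ℝ) :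
    ((iteratedDeriv n g x : ℝ) : ℂ) = iteratedDeriv n f x := by
  induction n generalizing x with
  | zero => simpa using hfg x
  | succ n ih =>
    have hdiff : DifferentiableOn ℂ (iteratedDeriv n f) U := by
      rw [iteratedDeriv_eq_iterate]
      exact ((hf.analyticOnNhd hU).iterated_deriv n).differentiableOn
    have hf' : HasDerivAt (iteratedDeriv n f) (iteratedDeriv (n + 1) f x) x := by
      rw [iteratedDeriv_succ]
      exact (hdiff.differentiableAt (hU.mem_nhds (hRU x))).hasDerivAt
    have hg' : HasDerivAt (iteratedDeriv n g) (iteratedDeriv (n + 1) f x).re x := by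
      simpa [← ih] using hf'.real_of_complex
    rw [iteratedDeriv_succ, hg'.deriv]
    refine (hf'.comp_ofReal.unique ?_).symm
    simpa [ih] using hg'.ofReal_comp

lemma ofReal_iteratedDeriv_arctan (n : ℕ) (x : ℝ) :
    ((iteratedDeriv n Real.arctan x : ℝ) : ℂ) = iteratedDeriv n arctan x :=
  ofReal_iteratedDeriv_of_differentiableOn isOpen_arctanDomain differentiableOn_arctan
    ofReal_mem_arctanDomain ofReal_arctan n x

theorem arctan_deriv_series_zero (x : ℝ) :
    HasSum (fun n : ℕ =>
      ((-1) ^ (n + 1) * x ^ n / (Nat.factorial n : ℝ)) *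
        iteratedDeriv n Real.arctan x)
      0 := by
  have htaylor := hasSum_taylorSeries_on_ball
    (differentiableOn_arctan.mono (ball_sqrt_one_add_sq_subset_arctanDomain x))
    (zero_mem_ball_sqrt_one_add_sq x)
  have hterm (n : ℕ) : (n ! : ℂ)⁻¹ • (0 - (x : ℂ)) ^ n • iteratedDeriv n arctan x =
      ((-((-1) ^ (n + 1) * x ^ n / n ! * iteratedDeriv n Real.arctan x) : ℝ) : ℂ) := by
    rw [← ofReal_iteratedDeriv_arctan]
    push_cast
    simp only [smul_eq_mul]
    ring
  rw [funext hterm, ← ofReal_zero, ← ofReal_arctan, Real.arctan_zero, hasSum_ofReal] at htaylor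
  simpa using htaylor.neg
end

section
/- For every real x, the iterated series −2 ∑_{m=1}^∞ ∑_{n=1}^{2m−1} (−1)ⁿ / ( (2m−1)(1+x²/4)^(2m−1) ) · (x/2)^(2(2m−n)−1) · C(2m−1, 2n−1) converges and its sum equals arctan(x), where C(a,b) denotes the binomial coefficient. -/
/-!
Put `t = x / 2` and `z = t / (1 + t i)`, so that `|z| < 1`.
Since `(1 + z i) / (1 - z i) = 1 + x i`, the real part of
`arctan z = -(i/2) log ((1 + z i) / (1 - z i))` is `arg (1 + x i) / 2 = arctan x / 2`.
On the other hand `z = -i t (t + i) / (1 + t²)`, so the real part of the `m`-th term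
`(-1)^m z^(2m+1) / (2m+1)` of the arctangent series is `t^(2m+1) Im((t + i)^(2m+1))` over
`(2m+1)(1 + t²)^(2m+1)`, and the binomial theorem turns this imaginary part into the inner sum.
-/

open Finset

namespace Complex

lemma im_I_pow_two_mul (j : ℕ) : (I ^ (2 * j)).im = 0 := by
  rw [pow_mul, I_sq, ← ofReal_one, ← ofReal_neg, ← ofReal_pow, ofReal_im]

lemma im_I_pow_two_mul_add_one (j : ℕ) : (I ^ (2 * j + 1)).im = (-1) ^ j := by
  rw [pow_succ, pow_mul, I_sq, ← ofReal_one, ← ofReal_neg, ← ofReal_pow, im_ofReal_mul, I_im,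
    mul_one]

lemma im_ofReal_add_I_pow (t : ℝ) (N : ℕ) :
    (((t : ℂ) + I) ^ N).im =
      ∑ n ∈ Icc 1 N, (-1) ^ (n - 1) * t ^ (N + 1 - 2 * n) * (N.choose (2 * n - 1) : ℝ) := by
  have hexpand : (((t : ℂ) + I) ^ N).im =
      ∑ k ∈ range (N + 1), t ^ (N - k) * (N.choose k : ℝ) * (I ^ k).im := by
    rw [add_comm, add_pow, im_sum]
    refine sum_congr rfl fun k _ => ?_
    rw [show I ^ k * (t : ℂ) ^ (N - k) * (N.choose k : ℂ)
        = ((t ^ (N - k) * N.choose k : ℝ) : ℂ) * I ^ k by push_cast; ring, im_ofReal_mul]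
  have hterm (n : ℕ) (hn : 1 ≤ n) :
      (-1) ^ (n - 1) * t ^ (N + 1 - 2 * n) * (N.choose (2 * n - 1) : ℝ)
      = t ^ (N - (2 * n - 1)) * (N.choose (2 * n - 1) : ℝ) * (I ^ (2 * n - 1)).im := by
    obtain ⟨j, rfl⟩ := Nat.exists_eq_add_of_le' hn
    rw [show 2 * (j + 1) - 1 = 2 * j + 1 by omega,
      show N + 1 - 2 * (j + 1) = N - (2 * j + 1) by omega, im_I_pow_two_mul_add_one,
      Nat.add_sub_cancel]
    ring
  rw [hexpand]
  symm
  -- only the odd exponents `k = 2n - 1 ≤ N` of `I` contribute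
  refine sum_bij_ne_zero (fun n _ _ => 2 * n - 1) ?_ ?_ ?_ ?_
  · intro n hn hne
    simp only [mem_Icc] at hn
    have : 2 * n - 1 ≤ N := by
      by_contra h
      exact hne (by rw [Nat.choose_eq_zero_of_lt (by omega)]; simp)
    simp only [mem_range]
    omega
  · intro a ha _ b hb _ h
    simp only [mem_Icc] at ha hb
    omega
  · intro k hk hne
    obtain ⟨j, rfl⟩ : Odd k := by
      by_contra h
      obtain ⟨j, rfl⟩ := Nat.not_odd_iff_even.mp h
      exact hne (by rw [← two_mul, im_I_pow_two_mul, mul_zero])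
    simp only [mem_range] at hk
    refine ⟨j + 1, by simp only [mem_Icc]; omega, ?_, by omega⟩
    rw [hterm _ (by omega), show 2 * (j + 1) - 1 = 2 * j + 1 by omega]
    exact hne
  · intro n hn _
    exact hterm n (mem_Icc.mp hn).1

lemma arg_one_add_mul_I (y : ℝ) : arg (1 + y * I) = Real.arctan y := by
  have hbound := abs_arg_lt_pi_div_two_iff.mpr (Or.inl (by simp : 0 < (1 + y * I).re))
  rw [abs_lt] at hbound
  rw [← Real.arctan_tan hbound.1 hbound.2, tan_arg]
  simp

lemma one_add_mul_I_ne_zero (t : ℝ) : 1 + t * I ≠ 0 := by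
  intro h
  simpa using congrArg re h

lemma norm_div_one_add_mul_I_lt_one (t : ℝ) : ‖(t : ℂ) / (1 + t * I)‖ < 1 := by
  rw [norm_div, div_lt_one (norm_pos_iff.mpr (one_add_mul_I_ne_zero t)), norm_real,
    Real.norm_eq_abs, ← sq_lt_sq₀ (abs_nonneg t) (norm_nonneg _), sq_abs, Complex.sq_norm,
    ← ofReal_one, normSq_add_mul_I]
  linarith

lemma re_arctan_div_one_add_mul_I (t : ℝ) :
    (arctan (t / (1 + t * I))).re = Real.arctan (2 * t) / 2 := by
  have hden := one_add_mul_I_ne_zero t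
  have hratio :
      (1 + t / (1 + t * I) * I) / (1 - t / (1 + t * I) * I) = 1 + ((2 * t : ℝ) : ℂ) * I := by
    rw [div_eq_iff]
    · field_simp
      push_cast
      ring
    · field_simp
      simp [hden]
  rw [arctan, hratio, ← arg_one_add_mul_I, neg_div, neg_mul, neg_re, div_mul_eq_mul_div, div_ofNat_re, I_mul_re, log_im, neg_div,
    neg_neg]

lemma re_neg_one_pow_mul_div_one_add_mul_I_pow (t : ℝ) (m : ℕ) :
    ((-1) ^ m * ((t : ℂ) / (1 + t * I)) ^ (2 * m + 1)).re =
      t ^ (2 * m + 1) * (((t : ℂ) + I) ^ (2 * m + 1)).im / (1 + t ^ 2) ^ (2 * m + 1) := by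
  have hz : (t : ℂ) / (1 + t * I) = ((t / (1 + t ^ 2) : ℝ) : ℂ) * (-I * (t + I)) := by
    have : (1 : ℂ) + t ^ 2 ≠ 0 := by exact_mod_cast (by positivity : (1 : ℝ) + t ^ 2 ≠ 0)
    rw [div_eq_iff (one_add_mul_I_ne_zero t)]
    push_cast
    field_simp
    linear_combination ((t : ℂ) ^ 3 + t + t ^ 2 * I) * I_sq
  have hsign : (-1 : ℂ) ^ m * (-I) ^ (2 * m + 1) = -I := by
    rw [pow_succ, pow_mul, neg_sq, I_sq, ← mul_assoc, ← mul_pow, neg_one_mul, neg_neg, one_pow,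
      one_mul]
  have hpow : (-1 : ℂ) ^ m * ((t / (1 + t ^ 2) : ℝ) * (-I * (t + I))) ^ (2 * m + 1) =
      ((t / (1 + t ^ 2)) ^ (2 * m + 1) : ℝ) * -(I * (t + I) ^ (2 * m + 1)) := by
    rw [mul_pow, mul_pow]
    push_cast
    linear_combination ((t / (1 + t ^ 2)) ^ (2 * m + 1) * (t + I) ^ (2 * m + 1) : ℂ) * hsign
  rw [hz, hpow, re_ofReal_mul, neg_re, I_mul_re, neg_neg, div_pow]
  ring

lemma two_mul_re_arctan_series_term (t : ℝ) (m : ℕ) :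
    2 * ((-1) ^ m * ((t : ℂ) / (1 + t * I)) ^ (2 * m + 1) / ↑(2 * m + 1)).re =
      -2 * ∑ n ∈ Icc 1 (2 * m + 1),
        (-1 : ℝ) ^ n / ((2 * (m : ℝ) + 1) * (1 + t ^ 2) ^ (2 * m + 1)) *
          t ^ (4 * m + 3 - 2 * n) * ((2 * m + 1).choose (2 * n - 1) : ℝ) := by
  rw [div_natCast_re, re_neg_one_pow_mul_div_one_add_mul_I_pow, im_ofReal_add_I_pow, mul_sum,
    sum_div, sum_div, mul_sum, mul_sum]
  refine sum_congr rfl fun n hn => ?_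
  obtain ⟨j, rfl⟩ := Nat.exists_eq_add_of_le' (mem_Icc.mp hn).1
  rcases le_or_gt (2 * (j + 1) - 1) (2 * m + 1) with hle | hlt
  · rw [show 4 * m + 3 - 2 * (j + 1) = (2 * m + 1) + (2 * m + 1 + 1 - 2 * (j + 1)) by omega,
      pow_add, Nat.add_sub_cancel, pow_succ]
    push_cast
    field_simp
    ring
  · simp [Nat.choose_eq_zero_of_lt hlt]

end Complex

theorem arctan_binomial_series (x : ℝ) :
    HasSum (fun m : ℕ =>
      -2 * ∑ n ∈ Finset.Icc 1 (2 * m + 1),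
        (-1 : ℝ) ^ n / ((2 * (m : ℝ) + 1) * (1 + x ^ 2 / 4) ^ (2 * m + 1)) *
          (x / 2) ^ (4 * m + 3 - 2 * n) * (Nat.choose (2 * m + 1) (2 * n - 1) : ℝ))
      (Real.arctan x) := by
  have hseries := (Complex.hasSum_re
    (Complex.hasSum_arctan (Complex.norm_div_one_add_mul_I_lt_one (x / 2)))).mul_left 2
  rw [Complex.re_arctan_div_one_add_mul_I, mul_div_cancel₀ _ two_ne_zero,
    mul_div_cancel₀ _ two_ne_zero] at hseries
  rw [show x ^ 2 / 4 = (x / 2) ^ 2 by ring]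
  simpa only [Complex.two_mul_re_arctan_series_term] using hseries
end

section
/- For every natural number n ≥ 0 and all real x and t, the n-th partial derivative with respect to t of x/(1+x²t²) satisfies ∂ⁿ/∂tⁿ ( x/(1+x²t²) ) = (−1)^(n+1) n! x^(n+1) / (2i) · ( 1/(xt+i)^(n+1) − 1/(xt−i)^(n+1) ), where the right-hand side is a complex expression whose value is real and i is the imaginary unit. -/
/-!
Partial fractions give `x / (1 + x²s²) = x / (2i) · ((xs - i)⁻¹ - (xs + i)⁻¹)`, and the `n`-th
derivative of `s ↦ (c s + d)⁻¹` is `(-1)ⁿ n! cⁿ (c s + d)^(-1-n)`. The computation may be done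
in `ℂ`: the coercion `ℝ → ℂ` is a continuous linear map, so it commutes with iterated
derivatives, and at real points the real derivatives of `s ↦ (c s + d)⁻¹` are the complex ones.
-/

open Complex Nat

lemma ofReal_iteratedDeriv {n : ℕ} {f : ℝ → ℝ} (hf : ContDiff ℝ n f) (t : ℝ) :
    ((iteratedDeriv n f t : ℝ) : ℂ) = iteratedDeriv n (fun s => (f s : ℂ)) t := by
  simp only [iteratedDeriv_eq_iteratedFDeriv]
  rw [show (fun s => (f s : ℂ)) = ofRealCLM ∘ f from rfl,
    ofRealCLM.iteratedFDeriv_comp_left hf.contDiffAt le_rfl]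
  rfl

theorem iteratedDeriv_comp_ofReal {F : ℂ → ℂ}
    (hF : ∀ (k : ℕ) (s : ℝ), DifferentiableAt ℂ (deriv^[k] F) s) (n : ℕ) :
    iteratedDeriv n (fun s : ℝ => F s) = fun s : ℝ => deriv^[n] F s := by
  rw [iteratedDeriv_eq_iterate]
  induction n with
  | zero => rfl
  | succ n ih =>
    funext s
    rw [Function.iterate_succ_apply', ih, Function.iterate_succ_apply']
    exact (hF n s).hasDerivAt.comp_ofReal.deriv

theorem iteratedDeriv_inv_linear_comp_ofReal {c d : ℂ} (h : ∀ s : ℝ, c * s + d ≠ 0)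
    (n : ℕ) :
    iteratedDeriv n (fun s : ℝ => (c * s + d)⁻¹) =
      fun s : ℝ => (-1) ^ n * n ! * c ^ n * (c * s + d) ^ (-1 - n : ℤ) := by
  rw [iteratedDeriv_comp_ofReal (F := fun z => (c * z + d)⁻¹), iter_deriv_inv_linear]
  intro k s
  rw [iter_deriv_inv_linear]
  fun_prop (disch := exact Or.inl (h s))

lemma inv_one_add_sq_eq_sub_inv {w : ℂ} (h₁ : w - I ≠ 0) (h₂ : w + I ≠ 0) :
    (1 + w ^ 2)⁻¹ = (2 * I)⁻¹ * ((w - I)⁻¹ - (w + I)⁻¹) := by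
  have h : 1 + w ^ 2 = (w - I) * (w + I) := by
    ring_nf
    rw [I_sq]
    ring
  rw [h]
  field_simp
  ring

lemma ofReal_mul_ofReal_add_ne_zero (x s : ℝ) {d : ℂ} (hd : d.im ≠ 0) :
    (x : ℂ) * s + d ≠ 0 :=
  fun h => hd (by simpa using congrArg im h)

open Complex in
theorem iteratedDeriv_integrand (n : ℕ) (x t : ℝ) :
    ((iteratedDeriv n (fun s : ℝ => x / (1 + x ^ 2 * s ^ 2)) t : ℝ) : ℂ) =
      (-1) ^ (n + 1) * (Nat.factorial n : ℂ) * (x : ℂ) ^ (n + 1) / (2 * I) *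
        (1 / ((x : ℂ) * (t : ℂ) + I) ^ (n + 1) - 1 / ((x : ℂ) * (t : ℂ) - I) ^ (n + 1)) := by
  have hsub (s : ℝ) := ofReal_mul_ofReal_add_ne_zero x s (d := -I) (by simp)
  have hadd (s : ℝ) := ofReal_mul_ofReal_add_ne_zero x s (d := I) (by simp)
  have hsmooth : ContDiff ℝ n (fun s : ℝ => x / (1 + x ^ 2 * s ^ 2)) :=
    contDiff_const.div (by fun_prop) fun s => by positivity
  have hpartial : (fun s : ℝ => ((x / (1 + x ^ 2 * s ^ 2) : ℝ) : ℂ)) =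
      fun s : ℝ => (x / (2 * I)) * (((x : ℂ) * s + -I)⁻¹ - ((x : ℂ) * s + I)⁻¹) := by
    funext s
    rw [div_eq_mul_inv, div_eq_mul_inv, mul_assoc, ← sub_eq_add_neg,
      ← inv_one_add_sq_eq_sub_inv (by simpa [← sub_eq_add_neg] using hsub s) (hadd s)]
    push_cast
    ring
  have hofReal : ContDiff ℝ n (fun s : ℝ => (s : ℂ)) := ofRealCLM.contDiff
  rw [ofReal_iteratedDeriv hsmooth, hpartial, iteratedDeriv_const_mul_field,
    iteratedDeriv_fun_sub (by fun_prop (disch := exact hsub t))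
      (by fun_prop (disch := exact hadd t)),
    iteratedDeriv_inv_linear_comp_ofReal hsub, iteratedDeriv_inv_linear_comp_ofReal hadd]
  simp only [show (-1 - n : ℤ) = -((n + 1 : ℕ) : ℤ) by push_cast; ring, zpow_neg, zpow_natCast,
    one_div, ← sub_eq_add_neg]
  ring
end

section
/- For every positive integer M and every real x, the complex series i ∑_{m=1}^M ∑_{n=0}^∞ x^(2n+1) / ( (2M)^(2n+1)(2n+1) ) · ( 1/( x(m−1/2)/M + i )^(2n+1) − 1/( x(m−1/2)/M − i )^(2n+1) ) converges (the sum over m being finite and the sum over n convergent for each m) and its value equals arctan(x) (viewed as a complex number). -/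
/-!
For real `c, h` put `w = h / (c - i)`. The odd power series `∑ w^(2n+1)/(2n+1)` is
`-log ((1 - w)/(1 + w)) / 2`, and `(1 - w)/(1 + w) = (1 + (c - h) i)/(1 + (c + h) i)`, whose
argument is `arctan (c - h) - arctan (c + h)`. The `m`-th inner series is the conjugate series minus
this one, i.e. `-2i` times its imaginary part; with `c = (m - 1/2) x / M`, `h = x / 2M` it equals
`-i (arctan (m x / M) - arctan ((m - 1) x / M))`, and the sum over `m` telescopes to `-i arctan x`.
-/
open Complex ComplexConjugate

theorem Complex.arg_one_add_mul_I_s13 (y : ℝ) : arg (1 + y * I) = Real.arctan y := by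
  rw [arg_of_re_nonneg (by simp), Real.arctan_eq_arcsin, norm_eq_sqrt_sq_add_sq]
  simp

theorem Complex.one_add_mul_I_ne_zero_s13 (y : ℝ) : 1 + y * I ≠ 0 := fun h => by
  simpa using congrArg re h

theorem Complex.arg_one_add_mul_I_div (a b : ℝ) :
    arg ((1 + a * I) / (1 + b * I)) = Real.arctan a - Real.arctan b := by
  have hmem : Real.arctan a - Real.arctan b ∈ Set.Ioc (-Real.pi) Real.pi := by
    have := Real.arctan_lt_pi_div_two a
    have := Real.neg_pi_div_two_lt_arctan a
    have := Real.arctan_lt_pi_div_two b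
    have := Real.neg_pi_div_two_lt_arctan b
    constructor <;> linarith
  have h := arg_div_coe_angle (one_add_mul_I_ne_zero_s13 a) (one_add_mul_I_ne_zero_s13 b)
  rwa [arg_one_add_mul_I_s13, arg_one_add_mul_I_s13, ← Real.Angle.coe_sub,
    arg_coe_angle_eq_iff_eq_toReal, Real.Angle.toReal_coe_eq_self_iff_mem_Ioc.mpr hmem] at h

theorem Complex.one_sub_div_one_add_div_sub_I (c h : ℝ) :
    (1 - h / (c - I)) / (1 + h / (c - I)) = (1 + (c - h : ℝ) * I) / (1 + (c + h : ℝ) * I) := by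
  have hcI : (c : ℂ) - I ≠ 0 := fun h0 => by simpa using congrArg im h0
  have hchI : (c : ℂ) - I + h ≠ 0 := fun h0 => by simpa using congrArg im h0
  rw [one_sub_div hcI, one_add_div hcI, div_div_div_cancel_right₀ hcI,
    div_eq_div_iff hchI (one_add_mul_I_ne_zero_s13 _)]
  push_cast
  linear_combination (-2 * h) * I_sq

theorem Complex.norm_ofReal_div_sub_I_lt_one {c h : ℝ} (hch : h ^ 2 < c ^ 2 + 1) :
    ‖(h : ℂ) / (c - I)‖ < 1 := by
  have hcI : 0 < ‖(c : ℂ) - I‖ := norm_pos_iff.mpr fun h0 => by simpa using congrArg im h0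
  rw [norm_div, div_lt_one hcI]
  apply lt_of_pow_lt_pow_left₀ 2 hcI.le
  rw [Complex.sq_norm, Complex.sq_norm]
  simpa [normSq_apply, sq] using hch

theorem Complex.hasSum_odd_pow_div {v : ℂ} (hv : ‖v‖ < 1) :
    HasSum (fun n : ℕ => v ^ (2 * n + 1) / (2 * n + 1)) (-log ((1 - v) / (1 + v)) / 2) := by
  -- the series is `artanh v = -i arctan (i v)`
  have h := (hasSum_arctan (z := I * v) (by simpa using hv)).mul_left (-I)
  have hterm (n : ℕ) : -I * ((-1) ^ n * (I * v) ^ (2 * n + 1) / ↑(2 * n + 1))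
      = v ^ (2 * n + 1) / (2 * n + 1) := by
    have hpow : (I * v) ^ (2 * n + 1) = (-1) ^ n * I * v ^ (2 * n + 1) := by
      rw [mul_pow, pow_succ, pow_mul, I_sq]
    have hsq : (-1 : ℂ) ^ n * (-1) ^ n = 1 := by rw [← mul_pow]; norm_num
    rw [hpow]
    push_cast
    linear_combination (-(-1) ^ n * (-1) ^ n * v ^ (2 * n + 1) / (2 * n + 1)) * I_sq
      + (v ^ (2 * n + 1) / (2 * n + 1)) * hsq
  have hval : -I * arctan (I * v) = -log ((1 - v) / (1 + v)) / 2 := by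
    have hIvI : I * v * I = -v := by linear_combination v * I_sq
    rw [arctan.eq_1, hIvI, sub_neg_eq_add, ← sub_eq_add_neg]
    linear_combination (log ((1 - v) / (1 + v)) / 2) * I_sq
  simpa only [hterm, hval] using h

theorem Complex.hasSum_arctan_add_sub_arctan_sub (c h : ℝ) (hch : h ^ 2 < c ^ 2 + 1) :
    HasSum (fun n : ℕ => (h : ℂ) ^ (2 * n + 1) / (2 * n + 1) *
        (1 / (c + I) ^ (2 * n + 1) - 1 / (c - I) ^ (2 * n + 1)))
      (-I * (Real.arctan (c + h) - Real.arctan (c - h) : ℝ)) := by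
  set w : ℂ := h / (c - I)
  set T : ℂ := -log ((1 - w) / (1 + w)) / 2
  have hT : HasSum (fun n : ℕ => w ^ (2 * n + 1) / (2 * n + 1)) T :=
    hasSum_odd_pow_div (norm_ofReal_div_sub_I_lt_one hch)
  have hconj : conj w = h / (c + I) := by simp [w]
  have hterm (n : ℕ) : (h : ℂ) ^ (2 * n + 1) / (2 * n + 1) *
      (1 / (c + I) ^ (2 * n + 1) - 1 / (c - I) ^ (2 * n + 1))
      = conj (w ^ (2 * n + 1) / (2 * n + 1)) - w ^ (2 * n + 1) / (2 * n + 1) := by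
    simp only [map_div₀, map_pow, map_add, map_mul, map_ofNat, map_natCast, map_one, hconj]
    simp only [w, div_pow]
    ring
  have hTim : T.im = (Real.arctan (c + h) - Real.arctan (c - h)) / 2 := by
    simp only [T, w, div_ofNat_im, neg_im, log_im, one_sub_div_one_add_div_sub_I,
      arg_one_add_mul_I_div]
    ring
  have hval : conj T - T = -I * (Real.arctan (c + h) - Real.arctan (c - h) : ℝ) := by
    rw [← neg_sub, sub_conj, hTim]
    push_cast
    ring
  simp only [hterm, ← hval]
  exact (hasSum_conj'.mpr hT).sub hT

theorem Finset.sum_Icc_one_sub_sub_one {R G : Type*} [Ring R] [AddCommGroup G] (g : R → G)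
    (n : ℕ) : ∑ m ∈ Finset.Icc 1 n, (g m - g (m - 1)) = g n - g 0 := by
  induction n with
  | zero => simp
  | succ n ih =>
    rw [Finset.sum_Icc_succ_top (by omega), ih]
    push_cast
    simp

theorem hasSum_arctan_EMI_term (M m : ℕ) (x : ℝ) :
    HasSum (fun n : ℕ =>
      (x : ℂ) ^ (2 * n + 1) / ((2 * (M : ℂ)) ^ (2 * n + 1) * (2 * (n : ℂ) + 1)) *
        (1 / ((x : ℂ) * (((m : ℂ) - 1 / 2) / (M : ℂ)) + I) ^ (2 * n + 1) -
         1 / ((x : ℂ) * (((m : ℂ) - 1 / 2) / (M : ℂ)) - I) ^ (2 * n + 1)))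
      (-I * (Real.arctan (m * x / M) - Real.arctan ((m - 1) * x / M) : ℝ)) := by
  have hm : (1 : ℝ) / 4 ≤ ((m : ℝ) - 1 / 2) ^ 2 := by
    rcases m with _ | m
    · norm_num
    · push_cast
      nlinarith [(Nat.cast_nonneg m : (0 : ℝ) ≤ m)]
  have hch : (x / (2 * M)) ^ 2 < (x * (m - 1 / 2) / M) ^ 2 + 1 := by
    have : (x * (m - 1 / 2) / M) ^ 2 = 4 * ((m : ℝ) - 1 / 2) ^ 2 * (x / (2 * M)) ^ 2 := by ring
    nlinarith [sq_nonneg (x / (2 * M))]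
  have h := hasSum_arctan_add_sub_arctan_sub (x * (m - 1 / 2) / M) (x / (2 * M)) hch
  have hf : (fun n : ℕ => ((x / (2 * M) : ℝ) : ℂ) ^ (2 * n + 1) / (2 * n + 1) *
      (1 / ((x * (m - 1 / 2) / M : ℝ) + I) ^ (2 * n + 1) -
        1 / ((x * (m - 1 / 2) / M : ℝ) - I) ^ (2 * n + 1))) = fun n : ℕ =>
      (x : ℂ) ^ (2 * n + 1) / ((2 * (M : ℂ)) ^ (2 * n + 1) * (2 * (n : ℂ) + 1)) *
        (1 / ((x : ℂ) * (((m : ℂ) - 1 / 2) / (M : ℂ)) + I) ^ (2 * n + 1) -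
         1 / ((x : ℂ) * (((m : ℂ) - 1 / 2) / (M : ℂ)) - I) ^ (2 * n + 1)) := by
    funext n
    push_cast
    rw [div_pow, div_div, mul_div_assoc]
  rwa [hf, show x * (m - 1 / 2) / M + x / (2 * M) = m * x / M by ring,
    show x * (m - 1 / 2) / M - x / (2 * M) = (m - 1) * x / M by ring] at h

open Complex in
theorem arctan_EMI_complex_series (M : ℕ) (hM : 0 < M) (x : ℝ) :
    (∀ m ∈ Finset.Icc 1 M, Summable (fun n : ℕ =>
      (x : ℂ) ^ (2 * n + 1) / ((2 * (M : ℂ)) ^ (2 * n + 1) * (2 * (n : ℂ) + 1)) *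
        (1 / ((x : ℂ) * (((m : ℂ) - 1 / 2) / (M : ℂ)) + I) ^ (2 * n + 1) -
         1 / ((x : ℂ) * (((m : ℂ) - 1 / 2) / (M : ℂ)) - I) ^ (2 * n + 1)))) ∧
    I * ∑ m ∈ Finset.Icc 1 M, ∑' n : ℕ,
      (x : ℂ) ^ (2 * n + 1) / ((2 * (M : ℂ)) ^ (2 * n + 1) * (2 * (n : ℂ) + 1)) *
        (1 / ((x : ℂ) * (((m : ℂ) - 1 / 2) / (M : ℂ)) + I) ^ (2 * n + 1) -
         1 / ((x : ℂ) * (((m : ℂ) - 1 / 2) / (M : ℂ)) - I) ^ (2 * n + 1))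
      = (Real.arctan x : ℂ) := by
  refine ⟨fun m _ => (hasSum_arctan_EMI_term M m x).summable, ?_⟩
  rw [Finset.sum_congr rfl fun m _ => (hasSum_arctan_EMI_term M m x).tsum_eq, ← Finset.mul_sum]
  simp only [ofReal_sub]
  rw [Finset.sum_Icc_one_sub_sub_one (fun y : ℝ => (Real.arctan (y * x / M) : ℂ)) M]
  have hM' : (M : ℝ) ≠ 0 := Nat.cast_ne_zero.mpr hM.ne'
  simp [mul_div_cancel_left₀ x hM', ← mul_assoc]
end

section
/- Let k be a positive integer and γ > 1 a real number, and set θ = 2^k · arctan(1/γ). If θ ∈ (−π/2, 3π/2) and cos(θ) ≠ 0, then π/4 = 2^(k−1) · arctan(1/γ) + arctan( (1 − sin(θ)) / cos(θ) ). -/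
theorem machin_like_identity (k : ℕ) (hk : 0 < k) (γ : ℝ) (hγ : 1 < γ)
    (hθ : 2 ^ k * Real.arctan (1 / γ) ∈ Set.Ioo (-(Real.pi / 2)) (3 * Real.pi / 2))
    (hcos : Real.cos (2 ^ k * Real.arctan (1 / γ)) ≠ 0) :
    Real.pi / 4 = 2 ^ (k - 1) * Real.arctan (1 / γ) +
      Real.arctan ((1 - Real.sin (2 ^ k * Real.arctan (1 / γ))) /
        Real.cos (2 ^ k * Real.arctan (1 / γ))) := by
  set x := Real.arctan (1 / γ) with hx
  set θ : ℝ := 2 ^ k * x with hθdef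
  set a : ℝ := Real.pi / 4 - θ / 2 with ha
  have h2a : 2 * a = Real.pi / 2 - θ := by rw [ha]; ring
  have hcos2a : Real.cos (2 * a) = Real.sin θ := by
    rw [h2a, Real.cos_pi_div_two_sub]
  have hsin2a : Real.sin (2 * a) = Real.cos θ := by
    rw [h2a, Real.sin_pi_div_two_sub]
  have hsq : Real.sin a ^ 2 + Real.cos a ^ 2 = 1 := Real.sin_sq_add_cos_sq a
  have hsin : 1 - Real.sin θ = 2 * Real.sin a ^ 2 := by
    rw [← hcos2a, Real.cos_two_mul]; nlinarith
  have hcosθ : Real.cos θ = 2 * Real.sin a * Real.cos a := by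
    rw [← hsin2a, Real.sin_two_mul]
  have hsa : Real.sin a ≠ 0 := by
    intro h; apply hcos; rw [hcosθ, h]; ring
  have hca : Real.cos a ≠ 0 := by
    intro h; apply hcos; rw [hcosθ, h]; ring
  have hratio : (1 - Real.sin θ) / Real.cos θ = Real.tan a := by
    rw [hsin, hcosθ, Real.tan_eq_sin_div_cos]
    field_simp
  have hbound1 : -(Real.pi / 2) < a := by
    have := hθ.2; rw [ha]; linarith
  have hbound2 : a < Real.pi / 2 := by
    have := hθ.1; rw [ha]; linarith
  have harctan : Real.arctan ((1 - Real.sin θ) / Real.cos θ) = a := by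
    rw [hratio, Real.arctan_tan hbound1 hbound2]
  rw [harctan]
  have h2 : (2 : ℝ) ^ k = 2 * 2 ^ (k - 1) := by
    rw [← pow_succ']
    congr 1
    omega
  have : θ = 2 * (2 ^ (k - 1) * x) := by rw [hθdef, h2]; ring
  rw [ha, this]; ring
end

section
/- Define the real sequence a_k by a_0 = 0 and a_{k+1} = √(2 + a_k). Then for every integer k ≥ 1, π/4 = 2^(k−1) · arctan( √(2 − a_{k−1}) / a_k ). -/
/-- The nested radical sequence `a_0 = 0`, `a_{k+1} = √(2 + a_k)`. -/
noncomputable def nestedRadical : ℕ → ℝ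
  | 0 => 0
  | k + 1 => Real.sqrt (2 + nestedRadical k)

open Real

lemma angle_lt (k : ℕ) : π / 2 ^ (k + 2) < π / 2 := by
  apply div_lt_div_of_pos_left pi_pos (by norm_num)
  calc (2:ℝ) < 2 ^ 2 := by norm_num
  _ ≤ 2 ^ (k + 2) := by apply pow_le_pow_right₀ (by norm_num); omega

lemma angle_le (k : ℕ) : π / 2 ^ (k + 1) ≤ π / 2 := by
  apply div_le_div_of_nonneg_left pi_pos.le (by norm_num)
  calc (2:ℝ) = 2 ^ 1 := by norm_num
  _ ≤ 2 ^ (k + 1) := by apply pow_le_pow_right₀ (by norm_num); omega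

lemma nr_eq (k : ℕ) : nestedRadical k = 2 * Real.cos (π / 2 ^ (k + 1)) := by
  induction k with
  | zero => simp [nestedRadical, Real.cos_pi_div_two]
  | succ n ih =>
    have hpos : (0:ℝ) < π / 2 ^ (n + 2) := by positivity
    have hcos : 0 ≤ Real.cos (π / 2 ^ (n + 2)) :=
      Real.cos_nonneg_of_mem_Icc ⟨by linarith [pi_pos], (angle_lt n).le⟩
    have hdouble : 2 * (π / 2 ^ (n + 2)) = π / 2 ^ (n + 1) := by ring
    have hsq : (2 * Real.cos (π / 2 ^ (n + 2))) ^ 2 = 2 + nestedRadical n := by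
      have := Real.cos_sq (π / 2 ^ (n + 2))
      rw [hdouble] at this
      rw [ih]; nlinarith [this]
    show Real.sqrt (2 + nestedRadical n) = _
    rw [← hsq, Real.sqrt_sq (by positivity)]

theorem pi_quarter_nested_radical (k : ℕ) (hk : 1 ≤ k) :
    Real.pi / 4 = 2 ^ (k - 1) *
      Real.arctan (Real.sqrt (2 - nestedRadical (k - 1)) / nestedRadical k) := by
  obtain ⟨m, rfl⟩ : ∃ m, k = m + 1 := ⟨k - 1, by omega⟩
  simp only [Nat.add_sub_cancel]
  have hpos : (0:ℝ) < π / 2 ^ (m + 2) := by positivity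
  have hlt := angle_lt m
  have hcos : 0 < Real.cos (π / 2 ^ (m + 2)) :=
    Real.cos_pos_of_mem_Ioo ⟨by linarith [pi_pos], hlt⟩
  have hsin : 0 ≤ Real.sin (π / 2 ^ (m + 2)) :=
    Real.sin_nonneg_of_nonneg_of_le_pi hpos.le (by linarith [pi_pos])
  have hdouble : 2 * (π / 2 ^ (m + 2)) = π / 2 ^ (m + 1) := by ring
  have hsqrt : Real.sqrt (2 - nestedRadical m) = 2 * Real.sin (π / 2 ^ (m + 2)) := by
    have h1 := Real.cos_sq (π / 2 ^ (m + 2))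
    have h2 := Real.sin_sq (π / 2 ^ (m + 2))
    rw [hdouble] at h1
    have h3 : 2 - nestedRadical m = (2 * Real.sin (π / 2 ^ (m + 2))) ^ 2 := by
      rw [nr_eq m]; nlinarith
    rw [h3, Real.sqrt_sq (by positivity)]
  rw [hsqrt, nr_eq (m + 1)]
  have hdiv : 2 * Real.sin (π / 2 ^ (m + 2)) / (2 * Real.cos (π / 2 ^ (m + 2)))
      = Real.tan (π / 2 ^ (m + 2)) := by
    rw [Real.tan_eq_sin_div_cos]; field_simp
  rw [hdiv, Real.arctan_tan (by linarith) hlt]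
  field_simp
  ring
end
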